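/- Let n ≥ 1 and let 𝒪 ⊆ ℕ^n be a finite nonempty order ideal. Then the multivariate formal power series Ind_𝒪(y_1, …, y_n) = Σ_{α ∈ ℕ^n} ind_𝒪(α) y^α ∈ ℚ[[y_1, …, y_n]], multiplied by ∏_{i=1}^n (1 − y_i)², is a polynomial. -/

import Mathlib

/-- An order ideal in ℕ^n: a set of exponent vectors closed under componentwise division. -/
def IsOrderIdeal {n : ℕ} (O : Set (Fin n →₀ ℕ)) : Prop :=
  ∀ α ∈ O, ∀ β : Fin n →₀ ℕ, β ≤ α → β ∈ O

/-- The border of a set `C ⊆ ℕ^n`: `∂C = {α + e_i : α ∈ C, i} \ C`. -/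
def border {n : ℕ} (C : Set (Fin n →₀ ℕ)) : Set (Fin n →₀ ℕ) :=
  {γ | ∃ α ∈ C, ∃ i : Fin n, γ = α + Finsupp.single i 1} \ C

/-- The closed higher borders: `∂̄⁰O = O`, `∂̄ᵏO = ∂(∂̄ᵏ⁻¹O) ∪ ∂̄ᵏ⁻¹O`. -/
def closedBorder {n : ℕ} (O : Set (Fin n →₀ ℕ)) : ℕ → Set (Fin n →₀ ℕ)
  | 0 => O
  | k + 1 => border (closedBorder O k) ∪ closedBorder O k

/-- The higher borders: `∂⁰O = O`, `∂ᵏO = ∂(∂̄ᵏ⁻¹O)`. -/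
def borderIter {n : ℕ} (O : Set (Fin n →₀ ℕ)) : ℕ → Set (Fin n →₀ ℕ)
  | 0 => O
  | k + 1 => border (closedBorder O k)

/-- The index of `α` relative to `O`: the minimal `k` with `α ∈ ∂̄ᵏO`. -/
noncomputable def ind {n : ℕ} (O : Set (Fin n →₀ ℕ)) (α : Fin n →₀ ℕ) : ℕ :=
  sInf {k | α ∈ closedBorder O k}

/-- Total degree of an exponent vector. -/
def deg {n : ℕ} (α : Fin n →₀ ℕ) : ℕ := ∑ i, α i

/-- The multivariate formal power series with prescribed coefficients. -/
noncomputable def seriesOfCoeff {n : ℕ} (f : (Fin n →₀ ℕ) → ℚ) : MvPowerSeries (Fin n) ℚ := f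

/-! Unfolding the recursion, `α ∈ ∂̄ᵏ𝒪` iff `α = β + δ` with `β ∈ 𝒪` and `|δ| ≤ k`. So once `α_j`
exceeds the `j`-th coordinate of every element of `𝒪`, one more step in direction `j` raises
`ind_𝒪` by exactly one: far out in direction `j` the coefficients of `Ind_𝒪` form an arithmetic
progression, which `(1 - y_j)²` annihilates. Multiplying by `1 - y_i` with `i ≠ j` preserves this
vanishing, so all coefficients of `∏ᵢ (1 - yᵢ)² · Ind_𝒪` outside a box are zero. -/

theorem Finsupp.degree_tsub_single_add_one {σ : Type*} {δ : σ →₀ ℕ} {i : σ}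
    (h : single i 1 ≤ δ) : (δ - single i 1).degree + 1 = δ.degree := by
  conv_rhs => rw [← tsub_add_cancel_of_le h]
  rw [map_add, degree_single]

section ClosedBorder

open Finsupp

variable {n : ℕ} {O : Set (Fin n →₀ ℕ)}

theorem mem_closedBorder_succ {k : ℕ} {α : Fin n →₀ ℕ} :
    α ∈ closedBorder O (k + 1) ↔
      α ∈ closedBorder O k ∨ ∃ α' ∈ closedBorder O k, ∃ i, α = α' + single i 1 := by
  rw [closedBorder, border, Set.sdiff_union_self, Set.mem_union, or_comm]
  rfl

theorem mem_closedBorder_iff {k : ℕ} {α : Fin n →₀ ℕ} :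
    α ∈ closedBorder O k ↔ ∃ β ∈ O, ∃ δ : Fin n →₀ ℕ, α = β + δ ∧ δ.degree ≤ k := by
  induction k generalizing α with
  | zero => simp [closedBorder, degree_eq_zero_iff]
  | succ k ih =>
    simp only [mem_closedBorder_succ, ih]
    constructor
    · rintro (⟨β, hβ, δ, rfl, hδ⟩ | ⟨_, ⟨β, hβ, δ, rfl, hδ⟩, i, rfl⟩)
      · exact ⟨β, hβ, δ, rfl, by omega⟩
      · exact ⟨β, hβ, δ + single i 1, add_assoc _ _ _, by rw [map_add, degree_single]; omega⟩
    · rintro ⟨β, hβ, δ, rfl, hδ⟩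
      by_cases hδk : δ.degree ≤ k
      · exact Or.inl ⟨β, hβ, δ, rfl, hδk⟩
      obtain ⟨i, hi⟩ : ∃ i, i ∈ δ.support :=
        support_nonempty_iff.mpr fun h => hδk (by simp [h])
      have hiδ : single i 1 ≤ δ :=
        single_le_iff.mpr (Nat.one_le_iff_ne_zero.mpr (mem_support_iff.mp hi))
      refine Or.inr ⟨β + (δ - single i 1), ⟨β, hβ, _, rfl, ?_⟩, i, ?_⟩
      · have := degree_tsub_single_add_one hiδ
        omega
      · rw [add_assoc, tsub_add_cancel_of_le hiδ]

theorem add_single_mem_closedBorder_succ {k : ℕ} {α : Fin n →₀ ℕ} (i : Fin n)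
    (h : α ∈ closedBorder O k) : α + single i 1 ∈ closedBorder O (k + 1) :=
  mem_closedBorder_succ.mpr (Or.inr ⟨α, h, i, rfl⟩)

theorem mem_closedBorder_of_add_single_mem {k : ℕ} {α : Fin n →₀ ℕ} {j : Fin n}
    (hj : ∀ β ∈ O, β j ≤ α j) (h : α + single j 1 ∈ closedBorder O (k + 1)) :
    α ∈ closedBorder O k := by
  obtain ⟨β, hβ, δ, hαδ, hδ⟩ := mem_closedBorder_iff.mp h
  have hjδ : single j 1 ≤ δ := by
    have := congr($hαδ j)
    simp only [Finsupp.add_apply, single_eq_same] at this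
    exact single_le_iff.mpr (by linarith [hj β hβ])
  refine mem_closedBorder_iff.mpr ⟨β, hβ, δ - single j 1, ?_, ?_⟩
  · rw [← add_left_inj (single j 1), hαδ, add_assoc, tsub_add_cancel_of_le hjδ]
  · have := degree_tsub_single_add_one hjδ
    omega

theorem ind_add_single {α : Fin n →₀ ℕ} {j : Fin n} (hα : ∃ k, α ∈ closedBorder O k)
    (hj : ∀ β ∈ O, β j ≤ α j) : ind O (α + single j 1) = ind O α + 1 := by
  obtain ⟨k, hk⟩ := hα
  have hnotO : α + single j 1 ∉ O := fun h => by
    simpa using hj _ h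
  have hpos : 1 ≤ ind O (α + single j 1) :=
    le_csInf ⟨k + 1, add_single_mem_closedBorder_succ j hk⟩ fun m hm =>
      Nat.one_le_iff_ne_zero.mpr fun hm0 => hnotO (by rwa [hm0] at hm)
  rw [ind, ← Nat.sInf_add hpos, ind]
  congr 2
  ext m
  exact ⟨mem_closedBorder_of_add_single_mem hj, add_single_mem_closedBorder_succ j⟩

end ClosedBorder

namespace MvPowerSeries

open Finsupp

variable {σ R : Type*} [CommRing R]

theorem coeff_add_single_mul_one_sub_X (F : MvPowerSeries σ R) (γ : σ →₀ ℕ) (j : σ) :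
    coeff (γ + single j 1) ((1 - X j) * F) = coeff (γ + single j 1) F - coeff γ F := by
  rw [mul_comm, mul_sub, mul_one, map_sub, X, coeff_add_mul_monomial, mul_one]

theorem coeff_one_sub_X_mul_of_coeff_add_single {F : MvPowerSeries σ R} {j : σ} {B : ℕ} {c : R}
    (hF : ∀ γ : σ →₀ ℕ, B ≤ γ j → coeff (γ + single j 1) F = coeff γ F + c)
    (γ : σ →₀ ℕ) (hγ : B < γ j) : coeff γ ((1 - X j) * F) = c := by
  have hj : single j 1 ≤ γ := single_le_iff.mpr (by omega)
  rw [← tsub_add_cancel_of_le hj, coeff_add_single_mul_one_sub_X,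
    hF _ (by rw [tsub_apply, single_eq_same]; omega), add_sub_cancel_left]

theorem coeff_one_sub_X_sq_mul_of_coeff_add_single {F : MvPowerSeries σ R} {j : σ} {B : ℕ}
    {c : R} (hF : ∀ γ : σ →₀ ℕ, B ≤ γ j → coeff (γ + single j 1) F = coeff γ F + c)
    (γ : σ →₀ ℕ) (hγ : B + 1 < γ j) : coeff γ ((1 - X j) ^ 2 * F) = 0 := by
  have hconst := coeff_one_sub_X_mul_of_coeff_add_single hF
  rw [sq, mul_assoc]
  refine coeff_one_sub_X_mul_of_coeff_add_single (B := B + 1) (fun δ hδ => ?_) γ hγ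
  rw [hconst δ (by omega), hconst _ (by rw [Finsupp.add_apply, single_eq_same]; omega), add_zero]

theorem coeff_one_sub_X_mul_eq_zero {G : MvPowerSeries σ R} {a j : σ} (haj : a ≠ j) {B : ℕ}
    (hG : ∀ γ : σ →₀ ℕ, B < γ j → coeff γ G = 0) (γ : σ →₀ ℕ) (hγ : B < γ j) :
    coeff γ ((1 - X a) * G) = 0 := by
  rw [sub_mul, one_mul, map_sub, X, coeff_monomial_mul, hG γ hγ]
  split_ifs
  · rw [hG _ (by rwa [tsub_apply, single_eq_of_ne' haj, tsub_zero]), mul_zero, sub_zero]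
  · rw [sub_zero]

theorem coeff_prod_one_sub_X_sq_mul_eq_zero [Fintype σ] {F : MvPowerSeries σ R} {b : σ → ℕ}
    (hF : ∀ j (γ : σ →₀ ℕ), b j < γ j → coeff γ ((1 - X j) ^ 2 * F) = 0)
    (j : σ) (γ : σ →₀ ℕ) (hγ : b j < γ j) :
    coeff γ ((∏ i, (1 - X i) ^ 2) * F) = 0 := by
  classical
  rw [← Finset.mul_prod_erase _ _ (Finset.mem_univ j), mul_comm (_ ^ 2), mul_assoc]
  revert γ
  refine Finset.prod_induction _
    (fun P => ∀ G : MvPowerSeries σ R, (∀ γ : σ →₀ ℕ, b j < γ j → coeff γ G = 0) →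
      ∀ γ : σ →₀ ℕ, b j < γ j → coeff γ (P * G) = 0)
    (fun P Q hP hQ G hG => by simpa only [mul_assoc] using hP _ (hQ G hG))
    (fun G hG => by simpa only [one_mul] using hG)
    (fun a ha G hG => ?_) _ (hF j)
  rw [sq, mul_assoc]
  have haj := Finset.ne_of_mem_erase ha
  exact coeff_one_sub_X_mul_eq_zero haj (coeff_one_sub_X_mul_eq_zero haj hG)

theorem exists_coe_eq_of_coeff_eq_zero [Finite σ] (F : MvPowerSeries σ R) (b : σ → ℕ)
    (hF : ∀ j (γ : σ →₀ ℕ), b j < γ j → coeff γ F = 0) :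
    ∃ p : MvPolynomial σ R, (p : MvPowerSeries σ R) = F := by
  classical
  have hfin : (Function.support fun γ => coeff γ F).Finite := by
    refine (Set.finite_Iic (equivFunOnFinite.symm b)).subset fun γ hγ j => ?_
    by_contra! hj
    exact hγ (hF j γ hj)
  exact ⟨.ofCoeff (ofSupportFinite _ hfin), ext fun γ => by rw [MvPolynomial.coeff_coe]; rfl⟩

end MvPowerSeries

theorem coeff_seriesOfCoeff {n : ℕ} (f : (Fin n →₀ ℕ) → ℚ) (γ : Fin n →₀ ℕ) :
    MvPowerSeries.coeff γ (seriesOfCoeff f) = f γ :=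
  rfl

theorem ind_genFun_rational_general (n : ℕ) (O : Set (Fin n →₀ ℕ))
    (hfin : O.Finite) (hne : O.Nonempty) (hO : IsOrderIdeal O) :
    ∃ p : MvPolynomial (Fin n) ℚ,
      (∏ i : Fin n, (1 - MvPowerSeries.X i) ^ 2) *
        seriesOfCoeff (fun α => (ind O α : ℚ)) = ↑p := by
  have hzero : (0 : Fin n →₀ ℕ) ∈ O :=
    let ⟨β, hβ⟩ := hne
    hO β hβ 0 zero_le
  have hmem (α : Fin n →₀ ℕ) : α ∈ closedBorder O α.degree :=
    mem_closedBorder_iff.mpr ⟨0, hzero, α, (zero_add α).symm, le_rfl⟩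
  obtain ⟨c, hc⟩ := hfin.bddAbove
  have hstep (j : Fin n) (α : Fin n →₀ ℕ) (hα : c j ≤ α j) :
      MvPowerSeries.coeff (α + Finsupp.single j 1) (seriesOfCoeff fun α => (ind O α : ℚ)) =
        MvPowerSeries.coeff α (seriesOfCoeff fun α => (ind O α : ℚ)) + 1 := by
    rw [coeff_seriesOfCoeff, coeff_seriesOfCoeff,
      ind_add_single ⟨_, hmem α⟩ fun β hβ => (hc hβ j).trans hα, Nat.cast_succ]
  obtain ⟨p, hp⟩ := MvPowerSeries.exists_coe_eq_of_coeff_eq_zero _ (fun j => c j + 1)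
    (MvPowerSeries.coeff_prod_one_sub_X_sq_mul_eq_zero fun j =>
      MvPowerSeries.coeff_one_sub_X_sq_mul_of_coeff_add_single (hstep j))
  exact ⟨p, hp.symm⟩

/-- For a finite nonempty order ideal `O ⊆ ℕ^n`, the generating function
`Ind_O(y₁,…,yₙ) = Σ_α ind_O(α) y^α`, multiplied by `∏ᵢ (1-yᵢ)²`, is a polynomial. -/
theorem ind_genFun_rational (n : ℕ) (hn : 1 ≤ n) (O : Set (Fin n →₀ ℕ))
    (hfin : O.Finite) (hne : O.Nonempty) (hO : IsOrderIdeal O) :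
    ∃ p : MvPolynomial (Fin n) ℚ,
      (∏ i : Fin n, (1 - MvPowerSeries.X i) ^ 2) *
        seriesOfCoeff (fun α => (ind O α : ℚ)) = ↑p :=
  ind_genFun_rational_general n O hfin hne hO
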